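/- Let 𝕂 be a field of prime characteristic p, q, r ∈ 𝕂ˣ, m ∈ ℕ₀ with (m)_q! ≠ 0 and b_m = ∏_{i=0}^{m-1}(1-q^i r) ≠ 0, and suppose q = 1 and r = -1 (which occurs when two distinct j ≤ m satisfy q^{n+j-1}r² = 1). Then 𝕁 ∩ [0, m] equals {0} if s = -1, and is empty otherwise, where 𝕁 is the recursively defined set attached to (q, r, s, p). -/

import Mathlib

variable {K : Type*} [Field K]

/-- The q-number `(k)_x = ∑_{i=0}^{k-1} x^i`. -/
def qNum (x : K) (k : ℕ) : K := ∑ i ∈ Finset.range k, x ^ i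

/-- The q-factorial `(m)_q! = ∏_{k=1}^m (k)_q`. -/
def qFac (q : K) (m : ℕ) : K := ∏ k ∈ Finset.range m, qNum q (k + 1)

/-- `b_m = ∏_{i=0}^{m-1} (1 - q^i r)`. -/
def bProd (q r : K) (m : ℕ) : K := ∏ i ∈ Finset.range m, (1 - q ^ i * r)

/-- The recursively defined set 𝕁 = 𝕁^p_{q,r,s}. -/
def memJ (q r s : K) : ℕ → Prop
  | j => q ^ (j * (j - 1) / 2) * (-r) ^ j * s = -1 ∧
      ∀ n, n < j → memJ q r s n →
        if (j - n) % 2 = 0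
        then qNum (q ^ (n + j - 1) * r ^ 2) ((j - n) / 2) = 0
        else qNum (-(q ^ ((n + j - 1) / 2) * r)) (j - n) = 0
  termination_by j => j

/-- The subset 𝕁₁ ⊆ 𝕁 (condition (1) of Lemma le:J). -/
def memJ1 (q r s : K) (j : ℕ) : Prop :=
  memJ q r s j ∧ ∀ k, k < j → memJ q r s k → q ^ (k + j - 1) * r ^ 2 ≠ 1

/-- The subset 𝕁₂ ⊆ 𝕁 (condition (2) of Lemma le:J). -/
def memJ2 (q r s : K) (n : ℕ) : Prop :=
  memJ q r s n ∧ ∃ j, j < n ∧ memJ q r s j ∧ q ^ (n + j - 1) * r ^ 2 = 1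

/-! With `q = 1` and `r = -1` every q-number `(k)_x` occurring in the definition of `𝕁` has
`x = 1`, so it is the integer `k`. The first condition then reads `s = -1`, and `j > 0` with
`0 ∈ 𝕁` forces `j` or `j / 2` to vanish in `𝕂`; this is excluded for `j ≤ m` since `m! ≠ 0`. -/

lemma qNum_one (k : ℕ) : qNum (1 : K) k = k := by
  simp [qNum]

lemma qFac_one (m : ℕ) : qFac (1 : K) m = m.factorial := by
  induction m with
  | zero => simp [qFac]
  | succ n ih =>
    rw [qFac, Finset.prod_range_succ, ← qFac, ih, qNum_one, Nat.factorial_succ]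
    push_cast
    ring

lemma natCast_ne_zero_of_factorial_ne_zero {k m : ℕ} (hk : 0 < k) (hkm : k ≤ m)
    (hm : (m.factorial : K) ≠ 0) : (k : K) ≠ 0 := by
  intro h
  apply hm
  obtain ⟨c, hc⟩ := Nat.dvd_factorial hk hkm
  rw [hc, Nat.cast_mul, h, zero_mul]

lemma eq_neg_one_of_memJ_one_neg_one {s : K} {j : ℕ} (h : memJ 1 (-1) s j) : s = -1 := by
  rw [memJ] at h
  simpa using h.1

lemma memJ_one_neg_one_zero : memJ (1 : K) (-1) (-1) 0 := by
  rw [memJ]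
  exact ⟨by simp, fun n hn => absurd hn (Nat.not_lt_zero n)⟩

lemma exists_natCast_eq_zero_of_memJ_one_neg_one {s : K} {j : ℕ} (hj : memJ 1 (-1) s j)
    (hj0 : 0 < j) (h0 : memJ 1 (-1) s 0) : ∃ k, 0 < k ∧ k ≤ j ∧ (k : K) = 0 := by
  rw [memJ] at hj
  have h := hj.2 0 hj0 h0
  simp only [Nat.sub_zero, Nat.zero_add, one_pow, one_mul, neg_neg, neg_one_sq, qNum_one] at h
  split_ifs at h with hpar
  · exact ⟨j / 2, by omega, Nat.div_le_self j 2, h⟩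
  · exact ⟨j, hj0, le_rfl, h⟩

theorem stmt_13_general (q r s : K)
    (hq : q = 1) (hr : r = -1) (m : ℕ)
    (hm : qFac q m ≠ 0) :
    (s = -1 → {j : ℕ | j ≤ m ∧ memJ q r s j} = {0}) ∧
    (s ≠ -1 → {j : ℕ | j ≤ m ∧ memJ q r s j} = ∅) := by
  subst hq hr
  rw [qFac_one] at hm
  refine ⟨fun hs => ?_, fun hs => ?_⟩
  · subst hs
    ext j
    refine ⟨fun ⟨hjm, hj⟩ => ?_, fun hj0 => ⟨hj0 ▸ Nat.zero_le m, hj0 ▸ memJ_one_neg_one_zero⟩⟩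
    by_contra hj0
    obtain ⟨k, hk, hkj, hk0⟩ := exists_natCast_eq_zero_of_memJ_one_neg_one hj
      (Nat.pos_of_ne_zero hj0) memJ_one_neg_one_zero
    exact natCast_ne_zero_of_factorial_ne_zero hk (hkj.trans hjm) hm hk0
  · ext j
    exact iff_of_false (fun hj => hs (eq_neg_one_of_memJ_one_neg_one hj.2)) id

theorem stmt_13 (p : ℕ) [CharP K p] (hp : p.Prime) (q r s : K) (hs : s ≠ 0)
    (hq : q = 1) (hr : r = -1) (m : ℕ)
    (hm : qFac q m ≠ 0) (hb : bProd q r m ≠ 0) :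
    (s = -1 → {j : ℕ | j ≤ m ∧ memJ q r s j} = {0}) ∧
    (s ≠ -1 → {j : ℕ | j ≤ m ∧ memJ q r s j} = ∅) :=
  stmt_13_general q r s hq hr m hm
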